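/- arXiv:cs/0602015 — 5 statements merged into one kernel-verified Lean document; each statement's English description precedes it below -/
import Mathlib

section
/- Let m be a positive integer, a > 0 a real constant, and γ : (0,∞) → (0,∞) a function such that ∫_{γ(P)}^∞ (e^{−x}/x) dx = P^a/m for all sufficiently large P. Then γ(P) → 0 as P → ∞ and lim_{P→∞} log(1 − e^{−γ(P)}) / P^a = −1/m. In particular, for every d > 0, P^d · (1 − e^{−γ(P)}) → 0 as P → ∞. -/
open Filter Set MeasureTheory Real

lemma integrableOn_exp_div_Ioi {t : ℝ} (ht : 0 < t) :
    IntegrableOn (fun x => Real.exp (-x) / x) (Ioi t) := by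
  have hg : IntegrableOn (fun x => Real.exp (-x) * t⁻¹) (Ioi t) :=
    (integrableOn_exp_neg_Ioi t).mul_const t⁻¹
  refine hg.mono' ?_ ?_
  · refine (ContinuousOn.aestronglyMeasurable ?_ measurableSet_Ioi)
    exact (continuous_exp.comp continuous_neg).continuousOn.div continuousOn_id
      (fun x hx => ne_of_gt (lt_trans ht hx))
  · filter_upwards [ae_restrict_mem measurableSet_Ioi] with x hx
    have hx0 : 0 < x := lt_trans ht hx
    rw [Real.norm_eq_abs, abs_of_nonneg (div_nonneg (exp_pos _).le hx0.le)]
    rw [div_eq_mul_inv]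
    exact mul_le_mul_of_nonneg_left (inv_anti₀ ht hx.le) (exp_pos _).le

lemma aux_ge_one {t : ℝ} (ht : 1 ≤ t) :
    (∫ x in Ioi t, Real.exp (-x) / x) ≤ 1 := by
  have ht0 : 0 < t := lt_of_lt_of_le one_pos ht
  have h1 : (∫ x in Ioi t, Real.exp (-x) / x) ≤ ∫ x in Ioi t, Real.exp (-x) := by
    refine setIntegral_mono_on (integrableOn_exp_div_Ioi ht0)
      (integrableOn_exp_neg_Ioi t) measurableSet_Ioi ?_
    intro x hx
    exact div_le_self (exp_pos _).le (le_trans ht (le_of_lt hx))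
  calc (∫ x in Ioi t, Real.exp (-x) / x) ≤ Real.exp (-t) := by
        rwa [integral_exp_neg_Ioi] at h1
    _ ≤ 1 := by
        rw [show (1:ℝ) = Real.exp 0 by simp]
        exact Real.exp_le_exp.mpr (by linarith)

lemma integrableOn_exp_div_Ioc {t : ℝ} (ht : 0 < t) :
    IntegrableOn (fun x => Real.exp (-x) / x) (Ioc t 1) :=
  (integrableOn_exp_div_Ioi ht).mono_set Ioc_subset_Ioi_self

lemma integrableOn_one_div_Ioc {t : ℝ} (ht : 0 < t) (ht1 : t ≤ 1) :
    IntegrableOn (fun x : ℝ => 1 / x) (Ioc t 1) := by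
  rw [← intervalIntegrable_iff_integrableOn_Ioc_of_le ht1]
  apply intervalIntegral.intervalIntegrable_one_div
  · intro x hx
    rcases hx with ⟨h1, h2⟩
    have : t ≤ x := by rwa [min_eq_left ht1] at h1
    exact ne_of_gt (lt_of_lt_of_le ht this)
  · exact (continuous_id.continuousOn)

lemma integral_one_div_Ioc {t : ℝ} (ht : 0 < t) (ht1 : t ≤ 1) :
    (∫ x in Ioc t 1, (1 : ℝ) / x) = -Real.log t := by
  rw [← intervalIntegral.integral_of_le ht1, integral_one_div]
  · rw [one_div, Real.log_inv]
  · intro h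
    rcases h with ⟨h1, _⟩
    rw [min_eq_left ht1] at h1
    exact absurd h1 (not_le.mpr ht)

lemma aux_upper {t : ℝ} (ht : 0 < t) (ht1 : t ≤ 1) :
    (∫ x in Ioi t, Real.exp (-x) / x) ≤ -Real.log t + 1 := by
  have hsplit : (∫ x in Ioi t, Real.exp (-x) / x)
      = (∫ x in Ioc t 1, Real.exp (-x) / x) + ∫ x in Ioi 1, Real.exp (-x) / x := by
    rw [← setIntegral_union (Ioc_disjoint_Ioi le_rfl) measurableSet_Ioi
      (integrableOn_exp_div_Ioc ht)
      ((integrableOn_exp_div_Ioi ht).mono_set (Ioi_subset_Ioi ht1)),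
      Ioc_union_Ioi_eq_Ioi ht1]
  have h1 : (∫ x in Ioc t 1, Real.exp (-x) / x) ≤ -Real.log t := by
    rw [← integral_one_div_Ioc ht ht1]
    refine setIntegral_mono_on (integrableOn_exp_div_Ioc ht)
      (integrableOn_one_div_Ioc ht ht1) measurableSet_Ioc ?_
    intro x hx
    have hx0 : 0 < x := lt_trans ht hx.1
    apply div_le_div_of_nonneg_right ?_ hx0.le
    · rw [show (1:ℝ) = Real.exp 0 by simp]
      exact Real.exp_le_exp.mpr (by linarith [hx.1, ht.le])
  have h2 : (∫ x in Ioi 1, Real.exp (-x) / x) ≤ 1 := aux_ge_one le_rfl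
  linarith [hsplit]

lemma aux_lower {t : ℝ} (ht : 0 < t) (ht1 : t ≤ 1) :
    -Real.log t - 1 ≤ ∫ x in Ioi t, Real.exp (-x) / x := by
  have hmono : (∫ x in Ioc t 1, Real.exp (-x) / x) ≤ ∫ x in Ioi t, Real.exp (-x) / x := by
    refine setIntegral_mono_set (integrableOn_exp_div_Ioi ht) ?_
      (HasSubset.Subset.eventuallyLE Ioc_subset_Ioi_self)
    filter_upwards [ae_restrict_mem measurableSet_Ioi] with x hx
    exact div_nonneg (exp_pos _).le (le_of_lt (lt_trans ht hx))
  have hpt : (∫ x in Ioc t 1, (1 / x - 1 : ℝ)) ≤ ∫ x in Ioc t 1, Real.exp (-x) / x := by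
    refine setIntegral_mono_on
      ((integrableOn_one_div_Ioc ht ht1).sub (integrableOn_const measure_Ioc_lt_top.ne))
      (integrableOn_exp_div_Ioc ht) measurableSet_Ioc ?_
    intro x hx
    have hx0 : 0 < x := lt_trans ht hx.1
    have h1 : 1 - x ≤ Real.exp (-x) := by
      have := Real.add_one_le_exp (-x); linarith
    have : (1 - x) / x ≤ Real.exp (-x) / x := div_le_div_of_nonneg_right h1 hx0.le
    calc (1 / x - 1 : ℝ) = (1 - x) / x := by field_simp
      _ ≤ Real.exp (-x) / x := this
  have hval : (∫ x in Ioc t 1, (1 / x - 1 : ℝ)) = -Real.log t - (1 - t) := by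
    rw [← intervalIntegral.integral_of_le ht1]
    rw [intervalIntegral.integral_sub ?_ intervalIntegrable_const]
    · rw [integral_one_div ?_, intervalIntegral.integral_const]
      · rw [one_div, Real.log_inv, smul_eq_mul, mul_one]
      · intro h
        rcases h with ⟨h1, _⟩
        rw [min_eq_left ht1] at h1
        exact absurd h1 (not_le.mpr ht)
    · rw [intervalIntegrable_iff_integrableOn_Ioc_of_le ht1]
      exact integrableOn_one_div_Ioc ht ht1
  have : -Real.log t - (1 - t) ≤ ∫ x in Ioi t, Real.exp (-x) / x := by
    rw [← hval]; linarith
  linarith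

/-- If the outage threshold `γ P` of channel-inversion power control satisfies the
average power constraint `∫_{γ P}^∞ e^(-x)/x dx = P^a / m` for large `P`, then
`γ P → 0`, the outage probability `1 - e^(-γ P)` decays like `exp (-P^a / m)`,
and in particular faster than any polynomial in `P`. -/
theorem outage_decay_exponential
    (m : ℕ) (hm : 0 < m) (a : ℝ) (ha : 0 < a)
    (γ : ℝ → ℝ) (hγpos : ∀ P : ℝ, 0 < P → 0 < γ P)
    (hpow : ∀ᶠ P : ℝ in atTop,
      (∫ x in Set.Ioi (γ P), Real.exp (-x) / x) = P ^ a / m) :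
    Tendsto γ atTop (nhds 0) ∧
    Tendsto (fun P : ℝ => Real.log (1 - Real.exp (-γ P)) / P ^ a) atTop
      (nhds (-1 / m)) ∧
    ∀ d : ℝ, 0 < d →
      Tendsto (fun P : ℝ => P ^ d * (1 - Real.exp (-γ P))) atTop (nhds 0) := by
  have hm' : (0:ℝ) < m := Nat.cast_pos.mpr hm
  have hmne : (m:ℝ) ≠ 0 := hm'.ne'
  have hQ : Tendsto (fun P : ℝ => P ^ a / m) atTop atTop :=
    (tendsto_rpow_atTop ha).atTop_div_const hm'
  have hev : ∀ᶠ P : ℝ in atTop, 0 < γ P ∧ γ P ≤ 1 ∧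
      Real.exp (-(P ^ a / m) - 1) ≤ γ P ∧ γ P ≤ Real.exp (1 - P ^ a / m) := by
    filter_upwards [hpow, eventually_ge_atTop (1:ℝ), hQ.eventually_ge_atTop 2]
      with P hp hP1 hQ2
    have hQ2' : (2:ℝ) ≤ P ^ a / m := hQ2
    have hP0 : 0 < P := lt_of_lt_of_le one_pos hP1
    have hg0 : 0 < γ P := hγpos P hP0
    have hgle1 : γ P ≤ 1 := by
      by_contra h
      push_neg at h
      have := aux_ge_one h.le
      rw [hp] at this
      linarith
    have hup := aux_upper hg0 hgle1
    have hlo := aux_lower hg0 hgle1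
    rw [hp] at hup hlo
    refine ⟨hg0, hgle1, ?_, ?_⟩
    · have hle : -(P ^ a / m) - 1 ≤ Real.log (γ P) := by linarith
      calc Real.exp (-(P ^ a / m) - 1) ≤ Real.exp (Real.log (γ P)) :=
            Real.exp_le_exp.mpr hle
        _ = γ P := Real.exp_log hg0
    · have hle : Real.log (γ P) ≤ 1 - P ^ a / m := by linarith
      calc γ P = Real.exp (Real.log (γ P)) := (Real.exp_log hg0).symm
        _ ≤ Real.exp (1 - P ^ a / m) := Real.exp_le_exp.mpr hle
  have hexp0 : Tendsto (fun P : ℝ => Real.exp (1 - P ^ a / m)) atTop (nhds 0) := by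
    rw [Real.tendsto_exp_comp_nhds_zero]
    have hneg : Tendsto (fun P : ℝ => -(P ^ a / m)) atTop atBot :=
      tendsto_neg_atTop_atBot.comp hQ
    have := tendsto_atBot_add_const_left atTop (1:ℝ) hneg
    simpa [sub_eq_add_neg] using this
  have h1 : Tendsto γ atTop (nhds 0) := by
    refine tendsto_of_tendsto_of_tendsto_of_le_of_le' tendsto_const_nhds hexp0 ?_ ?_
    · filter_upwards [hev] with P h; exact h.1.le
    · filter_upwards [hev] with P h; exact h.2.2.2
  -- pointwise bounds on the outage probability, used in parts 2 and 3
  have hout : ∀ᶠ P : ℝ in atTop,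
      Real.exp (-1) * γ P ≤ 1 - Real.exp (-γ P) ∧ 1 - Real.exp (-γ P) ≤ γ P := by
    filter_upwards [hev] with P h
    obtain ⟨hg0, hg1, _, _⟩ := h
    have ha1 : γ P + 1 ≤ Real.exp (γ P) := Real.add_one_le_exp _
    have ha2 : -γ P + 1 ≤ Real.exp (-γ P) := Real.add_one_le_exp _
    have h2 : Real.exp (-γ P) * (Real.exp (γ P) - 1) = 1 - Real.exp (-γ P) := by
      rw [mul_sub, ← Real.exp_add]; simp
    have h3 : Real.exp (-1) ≤ Real.exp (-γ P) := Real.exp_le_exp.mpr (by linarith)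
    constructor
    · calc Real.exp (-1) * γ P ≤ Real.exp (-γ P) * γ P :=
            mul_le_mul_of_nonneg_right h3 hg0.le
        _ ≤ Real.exp (-γ P) * (Real.exp (γ P) - 1) :=
            mul_le_mul_of_nonneg_left (by linarith) (Real.exp_pos _).le
        _ = 1 - Real.exp (-γ P) := h2
    · linarith
  have hinv0 : Tendsto (fun P : ℝ => (P ^ a)⁻¹) atTop (nhds 0) :=
    (tendsto_rpow_atTop ha).inv_tendsto_atTop
  refine ⟨h1, ?_, ?_⟩
  · -- part 2
    have hlowT : Tendsto (fun P : ℝ => -1/(m:ℝ) - 2 * (P ^ a)⁻¹) atTop (nhds (-1/m)) := by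
      have := (tendsto_const_nhds : Tendsto (fun _ : ℝ => (-1/(m:ℝ))) atTop
        (nhds (-1/(m:ℝ)))).sub (hinv0.const_mul 2)
      simpa using this
    have huppT : Tendsto (fun P : ℝ => -1/(m:ℝ) + (P ^ a)⁻¹) atTop (nhds (-1/m)) := by
      have := (tendsto_const_nhds : Tendsto (fun _ : ℝ => (-1/(m:ℝ))) atTop
        (nhds (-1/(m:ℝ)))).add hinv0
      simpa using this
    refine tendsto_of_tendsto_of_tendsto_of_le_of_le' hlowT huppT ?_ ?_
    · filter_upwards [hev, hout, eventually_ge_atTop (1:ℝ)] with P h ho hP1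
      obtain ⟨hg0, hg1, hlo, hup⟩ := h
      have hP0 : (0:ℝ) < P := lt_of_lt_of_le one_pos hP1
      have hPa : (0:ℝ) < P ^ a := Real.rpow_pos_of_pos hP0 a
      have hPane : (P:ℝ) ^ a ≠ 0 := hPa.ne'
      have houtpos : 0 < 1 - Real.exp (-γ P) :=
        lt_of_lt_of_le (mul_pos (Real.exp_pos _) hg0) ho.1
      have hexple : Real.exp (-(P ^ a / m) - 2) ≤ 1 - Real.exp (-γ P) := by
        calc Real.exp (-(P ^ a / m) - 2)
            = Real.exp (-1) * Real.exp (-(P ^ a / m) - 1) := by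
              rw [← Real.exp_add]; congr 1; ring
          _ ≤ Real.exp (-1) * γ P :=
              mul_le_mul_of_nonneg_left hlo (Real.exp_pos _).le
          _ ≤ 1 - Real.exp (-γ P) := ho.1
      have hlog_lb : -(P ^ a / m) - 2 ≤ Real.log (1 - Real.exp (-γ P)) :=
        (Real.le_log_iff_exp_le houtpos).mpr hexple
      have hdiv := div_le_div_of_nonneg_right hlog_lb hPa.le
      calc -1/(m:ℝ) - 2 * (P ^ a)⁻¹ = (-(P ^ a / m) - 2) / P ^ a := by
            field_simp
            try ring
        _ ≤ Real.log (1 - Real.exp (-γ P)) / P ^ a := hdiv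
    · filter_upwards [hev, hout, eventually_ge_atTop (1:ℝ)] with P h ho hP1
      obtain ⟨hg0, hg1, hlo, hup⟩ := h
      have hP0 : (0:ℝ) < P := lt_of_lt_of_le one_pos hP1
      have hPa : (0:ℝ) < P ^ a := Real.rpow_pos_of_pos hP0 a
      have hPane : (P:ℝ) ^ a ≠ 0 := hPa.ne'
      have houtpos : 0 < 1 - Real.exp (-γ P) :=
        lt_of_lt_of_le (mul_pos (Real.exp_pos _) hg0) ho.1
      have hlog_ub : Real.log (1 - Real.exp (-γ P)) ≤ 1 - P ^ a / m :=
        (Real.log_le_iff_le_exp houtpos).mpr (le_trans ho.2 hup)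
      have hdiv := div_le_div_of_nonneg_right hlog_ub hPa.le
      calc Real.log (1 - Real.exp (-γ P)) / P ^ a ≤ (1 - P ^ a / m) / P ^ a := hdiv
        _ = -1/(m:ℝ) + (P ^ a)⁻¹ := by
            rw [sub_div, div_right_comm, div_self hPane]
            ring
  · -- part 3
    intro d hd
    have hld : Tendsto (fun P : ℝ => d * (Real.log P / P ^ a) - 1/m) atTop
        (nhds (-1/m)) := by
      have h0 : Tendsto (fun P : ℝ => Real.log P / P ^ a) atTop (nhds 0) :=
        (isLittleO_log_rpow_atTop ha).tendsto_div_nhds_zero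
      have := (h0.const_mul d).sub (tendsto_const_nhds :
        Tendsto (fun _ : ℝ => (1/(m:ℝ))) atTop (nhds (1/(m:ℝ))))
      simpa [neg_div] using this
    have harg : Tendsto (fun P : ℝ => P ^ a * (d * (Real.log P / P ^ a) - 1/m))
        atTop atBot :=
      (tendsto_rpow_atTop ha).atTop_mul_neg (div_neg_of_neg_of_pos (by norm_num) hm') hld
    have hU0 : Tendsto
        (fun P : ℝ => Real.exp (P ^ a * (d * (Real.log P / P ^ a) - 1/m) + 1))
        atTop (nhds 0) := by
      rw [Real.tendsto_exp_comp_nhds_zero]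
      exact tendsto_atBot_add_const_right atTop 1 harg
    have hU0' : Tendsto (fun P : ℝ => P ^ d * Real.exp (1 - P ^ a / m)) atTop
        (nhds 0) := by
      refine hU0.congr' ?_
      filter_upwards [eventually_ge_atTop (1:ℝ)] with P hP1
      have hP0 : (0:ℝ) < P := lt_of_lt_of_le one_pos hP1
      have hPa : (0:ℝ) < P ^ a := Real.rpow_pos_of_pos hP0 a
      rw [Real.rpow_def_of_pos hP0 d, ← Real.exp_add]
      congr 1
      field_simp
      try ring
    refine tendsto_of_tendsto_of_tendsto_of_le_of_le' tendsto_const_nhds hU0' ?_ ?_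
    · filter_upwards [hev, hout, eventually_ge_atTop (1:ℝ)] with P h ho hP1
      have hP0 : (0:ℝ) < P := lt_of_lt_of_le one_pos hP1
      have houtpos : 0 < 1 - Real.exp (-γ P) :=
        lt_of_lt_of_le (mul_pos (Real.exp_pos _) h.1) ho.1
      exact mul_nonneg (Real.rpow_nonneg hP0.le d) houtpos.le
    · filter_upwards [hev, hout, eventually_ge_atTop (1:ℝ)] with P h ho hP1
      have hP0 : (0:ℝ) < P := lt_of_lt_of_le one_pos hP1
      exact mul_le_mul_of_nonneg_left (le_trans ho.2 h.2.2.2)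
        (Real.rpow_nonneg hP0.le d)
end

section
/- Let m be a positive integer, M > 0, and let μ be a probability measure on ℝ^m with μ{λ : λ_i ≤ 0 for some i} = 0 and μ{λ : ∏_{i=1}^m λ_i = M^m} = 0. Then lim_{P→∞} μ{ λ : ∑_{i=1}^m log(1 + (P/M)·λ_i) < m·log P } = μ{ λ : ∏_{i=1}^m λ_i < M^m }. -/
open Filter Set MeasureTheory Topology

/-!
Writing `1 + (P/M) λᵢ = (P/M) (M/P + λᵢ)` and `P^m = (P/M)^m M^m`, the outage event at power
`P` is, on the positive orthant, the event `∏ (M/P + λᵢ) < M^m`. These events increase with `P`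
and exhaust `{∏ λᵢ < M^m}`, so continuity of `μ` from below gives the limit.
-/

theorem tendsto_measure_iUnion_of_monotoneOn_Ioi {α : Type*} [MeasurableSpace α]
    (μ : Measure α) {s : ℝ → Set α} {a : ℝ} (hs : MonotoneOn s (Ioi a)) :
    Tendsto (fun x => μ (s x)) atTop (𝓝 (μ (⋃ x > a, s x))) := by
  have hmem : ∀ x, max x (a + 1) ∈ Ioi a := fun x =>
    lt_of_lt_of_le (lt_add_one a) (le_max_right _ _)
  have hmono : Monotone fun x => s (max x (a + 1)) := fun x y hxy =>
    hs (hmem x) (hmem y) (max_le_max_right _ hxy)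
  have hunion : (⋃ x, s (max x (a + 1))) = ⋃ x > a, s x := by
    refine Subset.antisymm (iUnion_subset fun x => ?_) (iUnion₂_subset fun x hx => ?_)
    · exact subset_biUnion_of_mem (u := s) (hmem x)
    · exact (hs hx (hmem x) (le_max_left _ _)).trans
        (subset_iUnion (fun y => s (max y (a + 1))) x)
  refine hunion ▸ (tendsto_measure_iUnion_atTop hmono).congr' ?_
  filter_upwards [eventually_ge_atTop (a + 1)] with x hx
  simp only [Function.comp_apply, max_eq_left hx]

section ShiftedProduct

variable {ι : Type*} [Fintype ι]

theorem sum_log_one_add_div_mul_lt_iff {P M : ℝ} (hP : 0 < P) (hM : 0 < M) {x : ι → ℝ}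
    (hx : ∀ i, 0 ≤ x i) :
    ∑ i, Real.log (1 + P / M * x i) < Fintype.card ι * Real.log P ↔
      ∏ i, (M / P + x i) < M ^ Fintype.card ι := by
  have hfactor : ∀ i, 1 + P / M * x i = P / M * (M / P + x i) := fun i => by field_simp
  have hfactor_pos : ∀ i, 0 < 1 + P / M * x i := fun i => by have := hx i; positivity
  have hprod : ∏ i, (1 + P / M * x i) = (P / M) ^ Fintype.card ι * ∏ i, (M / P + x i) := by
    simp only [hfactor, Finset.prod_mul_distrib, Finset.prod_const, Finset.card_univ]
  have hpow : P ^ Fintype.card ι = (P / M) ^ Fintype.card ι * M ^ Fintype.card ι := by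
    rw [← mul_pow, div_mul_cancel₀ P hM.ne']
  rw [← Real.log_pow, ← Real.log_prod fun i _ => (hfactor_pos i).ne',
    Real.log_lt_log_iff (Finset.prod_pos fun i _ => hfactor_pos i) (by positivity), hprod, hpow,
    mul_lt_mul_iff_right₀ (by positivity)]

def shiftedProdLt (M c P : ℝ) : Set (ι → ℝ) :=
  {x | (∀ i, 0 < x i) ∧ ∏ i, (M / P + x i) < c}

variable {M : ℝ} (c : ℝ)

theorem shiftedProdLt_monotoneOn (hM : 0 ≤ M) :
    MonotoneOn (fun P => shiftedProdLt (ι := ι) M c P) (Ioi 0) := by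
  intro P hP Q hQ hPQ x ⟨hx, hlt⟩
  refine ⟨hx, lt_of_le_of_lt (Finset.prod_le_prod (fun i _ => ?_) fun i _ => ?_) hlt⟩
  · exact add_nonneg (div_nonneg hM (le_of_lt hQ)) (hx i).le
  · gcongr

theorem iUnion_shiftedProdLt (hM : 0 ≤ M) :
    ⋃ P > 0, shiftedProdLt (ι := ι) M c P = {x | (∀ i, 0 < x i) ∧ ∏ i, x i < c} := by
  ext x
  simp only [shiftedProdLt, mem_iUnion, mem_ofPred_eq, exists_prop]
  constructor
  · rintro ⟨P, hP, hx, hlt⟩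
    refine ⟨hx, lt_of_le_of_lt (Finset.prod_le_prod (fun i _ => (hx i).le) fun i _ => ?_) hlt⟩
    exact le_add_of_nonneg_left (div_nonneg hM hP.le)
  · rintro ⟨hx, hlt⟩
    have hlim : Tendsto (fun P => ∏ i, (M / P + x i)) atTop (𝓝 (∏ i, x i)) := by
      simpa using tendsto_finsetProd Finset.univ fun i _ =>
        (tendsto_const_nhds.div_atTop tendsto_id).add (tendsto_const_nhds (x := x i))
    obtain ⟨P, hP, hPlt⟩ := ((eventually_gt_atTop 0).and (hlim.eventually_lt_const hlt)).exists
    exact ⟨P, hP, hx, hPlt⟩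

end ShiftedProduct

theorem outage_probability_limit_general
    (m : ℕ) (M : ℝ) (hM : 0 < M)
    (μ : Measure (Fin m → ℝ))
    (hpos : μ {lam | ∃ i, lam i ≤ 0} = 0) :
    Tendsto
      (fun P : ℝ =>
        μ {lam | (∑ i, Real.log (1 + P / M * lam i)) < m * Real.log P})
      atTop (nhds (μ {lam | (∏ i, lam i) < M ^ m})) := by
  have hG : ∀ᵐ x ∂μ, ∀ i, 0 < x i := by
    rw [ae_iff]
    simpa only [not_forall, not_lt] using hpos
  have houtage : ∀ P > 0, μ {lam | (∑ i, Real.log (1 + P / M * lam i)) < m * Real.log P} =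
      μ (shiftedProdLt M (M ^ m) P) := fun P hP =>
    measure_congr <| eventuallyEq_set.2 <| hG.mono fun x hx => by
      simpa [shiftedProdLt, hx] using sum_log_one_add_div_mul_lt_iff hP hM fun i => (hx i).le
  have hlimit : μ (⋃ P > 0, shiftedProdLt M (M ^ m) P) = μ {lam | (∏ i, lam i) < M ^ m} := by
    rw [iUnion_shiftedProdLt _ hM.le]
    exact measure_congr <| eventuallyEq_set.2 <| hG.mono fun x hx => by simp [hx]
  rw [← hlimit]
  refine (tendsto_measure_iUnion_of_monotoneOn_Ioi μ (shiftedProdLt_monotoneOn _ hM.le)).congr' ?_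
  filter_upwards [eventually_gt_atTop 0] with P hP
  exact (houtage P hP).symm

/-- At maximum multiplexing gain `r = m` with receiver-only CSI, the outage
probability converges to the constant `μ {λ | ∏ λᵢ < M^m}`. -/
theorem outage_probability_limit
    (m : ℕ) (hm : 0 < m) (M : ℝ) (hM : 0 < M)
    (μ : Measure (Fin m → ℝ)) [IsProbabilityMeasure μ]
    (hpos : μ {lam | ∃ i, lam i ≤ 0} = 0)
    (hboundary : μ {lam | (∏ i, lam i) = M ^ m} = 0) :
    Tendsto
      (fun P : ℝ =>
        μ {lam | (∑ i, Real.log (1 + P / M * lam i)) < m * Real.log P})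
      atTop (nhds (μ {lam | (∏ i, lam i) < M ^ m})) :=
  outage_probability_limit_general m M hM μ hpos
end

section
/- Let L ≥ 1 be an integer, α ∈ [0,1) a real, and F : [0,∞) → [0,1] nondecreasing with lim_{t→0⁺} F(t) = 0. Suppose γ : (0,∞) → (0,∞) satisfies (P^α/γ(P))·(1 − F(γ(P))) = P/L for all sufficiently large P. Then γ(P) → 0 as P → ∞ and lim_{P→∞} γ(P)·P^{1−α} = L. -/
open Filter Set

/-- Base step of the paper's Lemma 2: the outermost quantization threshold
`γ P`, defined by `(P^α / γ P) (1 - F (γ P)) = P / L`, satisfies `γ P → 0` and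
`γ P ≈ L / P^(1-α)` as `P → ∞`. -/
theorem outermost_threshold_asymptotic
    (L : ℕ) (hL : 1 ≤ L) (α : ℝ) (hα0 : 0 ≤ α) (hα1 : α < 1)
    (F : ℝ → ℝ)
    (hmono : MonotoneOn F (Set.Ici 0))
    (hrange : ∀ x : ℝ, 0 ≤ x → F x ∈ Set.Icc (0:ℝ) 1)
    (hF0 : Tendsto F (nhdsWithin 0 (Set.Ioi 0)) (nhds 0))
    (γ : ℝ → ℝ) (hγpos : ∀ P : ℝ, 0 < P → 0 < γ P)
    (heq : ∀ᶠ P : ℝ in atTop, (P ^ α / γ P) * (1 - F (γ P)) = P / L) :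
    Tendsto γ atTop (nhds 0) ∧
    Tendsto (fun P : ℝ => γ P * P ^ (1 - α)) atTop (nhds L) := by
  have hL' : (0:ℝ) < L := by exact_mod_cast hL
  have hev : ∀ᶠ P : ℝ in atTop, γ P = L * P ^ (α - 1) * (1 - F (γ P)) := by
    filter_upwards [heq, eventually_gt_atTop (0:ℝ)] with P hP hP0
    have hγ := hγpos P hP0
    have hPα : (0:ℝ) < P ^ α := Real.rpow_pos_of_pos hP0 α
    have h1 : P ^ (α - 1) = P ^ α / P := by
      rw [Real.rpow_sub hP0, Real.rpow_one]
    rw [h1]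
    field_simp at hP ⊢
    nlinarith [hP]
  have hub : ∀ᶠ P : ℝ in atTop, γ P ≤ L * P ^ (α - 1) := by
    filter_upwards [hev, eventually_gt_atTop (0:ℝ)] with P hP hP0
    have hγ := (hγpos P hP0).le
    have hF := hrange (γ P) hγ
    have hPp : (0:ℝ) ≤ P ^ (α - 1) := (Real.rpow_pos_of_pos hP0 _).le
    rw [hP]
    exact mul_le_of_le_one_right (mul_nonneg hL'.le hPp) (by linarith [hF.1])
  have hglb : ∀ᶠ P : ℝ in atTop, 0 ≤ γ P := by
    filter_upwards [eventually_gt_atTop (0:ℝ)] with P hP0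
    exact (hγpos P hP0).le
  have htop : Tendsto (fun P : ℝ => (L:ℝ) * P ^ (α - 1)) atTop (nhds 0) := by
    have h := (tendsto_rpow_neg_atTop (y := 1 - α) (by linarith)).const_mul (L:ℝ)
    rw [mul_zero] at h
    refine h.congr (fun P => ?_)
    ring_nf
  have hγ0 : Tendsto γ atTop (nhds 0) := squeeze_zero' hglb hub htop
  refine ⟨hγ0, ?_⟩
  have hγin : Tendsto γ atTop (nhdsWithin 0 (Set.Ioi 0)) := by
    rw [tendsto_nhdsWithin_iff]
    exact ⟨hγ0, by filter_upwards [eventually_gt_atTop (0:ℝ)] with P hP0 using hγpos P hP0⟩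
  have hFγ : Tendsto (fun P => F (γ P)) atTop (nhds 0) := hF0.comp hγin
  have hlim : Tendsto (fun P : ℝ => (L:ℝ) * (1 - F (γ P))) atTop (nhds L) := by
    have := ((tendsto_const_nhds (x := (1:ℝ))).sub hFγ).const_mul (L:ℝ)
    simpa using this
  refine hlim.congr' ?_
  filter_upwards [hev, eventually_gt_atTop (0:ℝ)] with P hP hP0
  have key : P ^ (α - 1) * P ^ (1 - α) = 1 := by
    rw [← Real.rpow_add hP0]; norm_num
  have h2 : (L:ℝ) * (1 - F (γ P)) = ((L:ℝ) * P ^ (α-1) * (1 - F (γ P))) * P ^ (1-α) := by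
    rw [show ((L:ℝ) * P ^ (α-1) * (1 - F (γ P))) * P ^ (1-α)
        = (L:ℝ) * (1 - F (γ P)) * (P ^ (α-1) * P ^ (1-α)) from by ring, key, mul_one]
  rw [h2, ← hP]
end

section
/- Let L ≥ 1 be an integer, α ∈ [0,1), k ≥ 1 an integer, and β > 0. Let F : [0,∞) → [0,1] be nondecreasing with lim_{t→0⁺} F(t)/t^k = β. Suppose γ_{L−1}, γ_{L−2}, …, γ₀ : (0,∞) → (0,∞) satisfy, for all sufficiently large P: (P^α/γ_{L−1}(P))·(1 − F(γ_{L−1}(P))) = P/L, and γ_j(P) = L·P^{α−1}·F(γ_{j+1}(P)) for j = 0, 1, …, L−2. Then for each j ∈ {0,…,L−1} there exists a constant c_j > 0 with lim_{P→∞} γ_j(P)·P^{(1−α)·∑_{l=0}^{L−1−j} k^l} = c_j. In particular, the outage threshold satisfies γ₀(P) ≈ c₀ / P^{(1−α)·G(k,L)} where G(k,L) = ∑_{l=0}^{L−1} k^l. -/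
open Filter Set Finset

/-- Paper's Lemma 2 (outage-threshold asymptotics for the equi-power quantizer):
with `F(t) ∼ β t^k` near `0`, the thresholds `γ_(L-1), …, γ_0` of the equi-power
`L`-bin quantizer satisfy `γ_j(P) ≈ c_j / P^((1-α) ∑_{l=0}^{L-1-j} k^l)`; in
particular the outage threshold satisfies
`γ_0(P) ≈ c_0 / P^((1-α) G(k,L))` with `G(k,L) = ∑_{l=0}^{L-1} k^l`. -/
theorem equi_power_quantizer_threshold_asymptotics
    (L : ℕ) (hL : 1 ≤ L) (α : ℝ) (hα0 : 0 ≤ α) (hα1 : α < 1)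
    (k : ℕ) (hk : 1 ≤ k) (β : ℝ) (hβ : 0 < β)
    (F : ℝ → ℝ)
    (hmono : MonotoneOn F (Set.Ici 0))
    (hrange : ∀ x : ℝ, 0 ≤ x → F x ∈ Set.Icc (0:ℝ) 1)
    (hFasymp : Tendsto (fun t : ℝ => F t / t ^ k) (nhdsWithin 0 (Set.Ioi 0)) (nhds β))
    (γ : ℕ → ℝ → ℝ)
    (hγpos : ∀ j : ℕ, j < L → ∀ P : ℝ, 0 < P → 0 < γ j P)
    (hlast : ∀ᶠ P : ℝ in atTop,
      (P ^ α / γ (L - 1) P) * (1 - F (γ (L - 1) P)) = P / L)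
    (hrec : ∀ j : ℕ, j < L - 1 → ∀ᶠ P : ℝ in atTop,
      γ j P = L * P ^ (α - 1) * F (γ (j + 1) P)) :
    ∀ j : ℕ, j < L → ∃ c : ℝ, 0 < c ∧
      Tendsto
        (fun P : ℝ =>
          γ j P * P ^ ((1 - α) * ∑ l ∈ Finset.range (L - j), (k : ℝ) ^ l))
        atTop (nhds c) := by
  have hLpos : (0:ℝ) < L := by exact_mod_cast hL
  have hkne : k ≠ 0 := by omega
  -- F tends to 0 from the right at 0
  have hF0 : Tendsto F (nhdsWithin 0 (Set.Ioi 0)) (nhds 0) := by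
    have hpow : Tendsto (fun t : ℝ => t ^ k) (nhdsWithin 0 (Set.Ioi 0)) (nhds 0) := by
      have h := ((continuous_pow k).tendsto (0:ℝ)).mono_left
        (nhdsWithin_le_nhds : nhdsWithin (0:ℝ) (Set.Ioi 0) ≤ nhds 0)
      simpa [zero_pow hkne] using h
    have h1 := hFasymp.mul hpow
    rw [mul_zero] at h1
    refine h1.congr' ?_
    filter_upwards [self_mem_nhdsWithin] with t ht
    have ht0 : t ≠ 0 := ne_of_gt ht
    field_simp
  -- positivity of the geometric sums
  have hsumpos : ∀ d : ℕ, (0:ℝ) < ∑ l ∈ Finset.range (d + 1), (k:ℝ) ^ l := by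
    intro d
    apply Finset.sum_pos
    · intro i _
      positivity
    · exact ⟨0, Finset.mem_range.mpr (by omega)⟩
  have h1α : (0:ℝ) < 1 - α := by linarith
  -- main downward induction
  have key : ∀ d : ℕ, d < L → ∃ c : ℝ, 0 < c ∧
      Tendsto (fun P : ℝ =>
          γ (L - 1 - d) P * P ^ ((1 - α) * ∑ l ∈ Finset.range (d + 1), (k : ℝ) ^ l))
        atTop (nhds c) := by
    intro d
    induction d with
    | zero =>
      intro _
      refine ⟨L, hLpos, ?_⟩
      set j := L - 1 with hj
      have hjL : j < L := by omega
      have hexp : ((1 - α) * ∑ l ∈ Finset.range (0 + 1), (k:ℝ) ^ l) = 1 - α := by simp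
      -- rewrite the function eventually
      have hcomb : ∀ᶠ P : ℝ in atTop,
          γ j P * P ^ ((1 - α) * ∑ l ∈ Finset.range (0 + 1), (k:ℝ) ^ l)
            = L * (1 - F (γ j P)) := by
        filter_upwards [hlast, eventually_gt_atTop 0] with P heq hP
        have hγ : 0 < γ j P := hγpos j hjL P hP
        have hPα : (0:ℝ) < P ^ α := Real.rpow_pos_of_pos hP α
        rw [hexp, Real.rpow_sub hP, Real.rpow_one]
        field_simp at heq ⊢
        linarith [heq]
      -- γ j P → 0 within Ioi 0
      have hγ0 : Tendsto (fun P => γ j P) atTop (nhds 0) := by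
        have hub : ∀ᶠ P : ℝ in atTop, γ j P ≤ L * P ^ (α - 1) := by
          filter_upwards [hcomb, eventually_gt_atTop 0] with P hc hP
          have hγ : 0 < γ j P := hγpos j hjL P hP
          have hFmem := hrange (γ j P) (le_of_lt hγ)
          rw [hexp] at hc
          have hP1 : (0:ℝ) < P ^ (1 - α) := Real.rpow_pos_of_pos hP _
          have hle : γ j P * P ^ (1 - α) ≤ L := by
            rw [hc]
            nlinarith [hFmem.1, hFmem.2]
          have hthis : γ j P ≤ L / P ^ (1 - α) := by
            rw [le_div_iff₀ hP1]; exact hle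
          calc γ j P ≤ L / P ^ (1 - α) := hthis
            _ = L * P ^ (α - 1) := by
                rw [show α - 1 = -(1 - α) by ring, Real.rpow_neg hP.le, div_eq_mul_inv]
        have hlb : ∀ᶠ P : ℝ in atTop, (0:ℝ) ≤ γ j P := by
          filter_upwards [eventually_gt_atTop 0] with P hP
          exact le_of_lt (hγpos j hjL P hP)
        have hto0 : Tendsto (fun P : ℝ => (L:ℝ) * P ^ (α - 1)) atTop (nhds 0) := by
          have h := tendsto_rpow_neg_atTop (y := 1 - α) h1α
          have h2 : Tendsto (fun P : ℝ => P ^ (α - 1)) atTop (nhds 0) := by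
            simpa [neg_sub] using h
          simpa using h2.const_mul (L:ℝ)
        exact tendsto_of_tendsto_of_tendsto_of_le_of_le' tendsto_const_nhds hto0 hlb hub
      have hγ0' : Tendsto (fun P => γ j P) atTop (nhdsWithin 0 (Set.Ioi 0)) := by
        rw [tendsto_nhdsWithin_iff]
        refine ⟨hγ0, ?_⟩
        filter_upwards [eventually_gt_atTop 0] with P hP
        exact hγpos j hjL P hP
      have hFγ : Tendsto (fun P => F (γ j P)) atTop (nhds 0) := hF0.comp hγ0'
      have hlim : Tendsto (fun P => (L:ℝ) * (1 - F (γ j P))) atTop (nhds L) := by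
        have h := (tendsto_const_nhds (x := (1:ℝ)) (f := atTop)).sub hFγ
        have h2 := h.const_mul (L:ℝ)
        simpa using h2
      exact hlim.congr' (hcomb.mono fun _ h => h.symm)
    | succ d ih =>
      intro hdL
      obtain ⟨c, hc, hten⟩ := ih (by omega)
      set j := L - 1 - (d + 1) with hjdef
      have hj1 : j + 1 = L - 1 - d := by omega
      have hjL1 : j < L - 1 := by omega
      have hjL : j < L := by omega
      rw [← hj1] at hten
      set S : ℝ := ∑ l ∈ Finset.range (d + 1), (k:ℝ) ^ l with hS
      have hSpos : 0 < S := hsumpos d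
      have hSsucc : ∑ l ∈ Finset.range (d + 1 + 1), (k:ℝ) ^ l = (k:ℝ) * S + 1 := by
        rw [hS, geom_sum_succ]
      set E' : ℝ := (1 - α) * S with hE'
      have hE'pos : 0 < E' := by positivity
      -- γ (j+1) tends to 0 within Ioi 0
      have hγ1 : Tendsto (fun P => γ (j + 1) P) atTop (nhds 0) := by
        have h2 : Tendsto (fun P : ℝ => (γ (j + 1) P * P ^ E') * P ^ (-E')) atTop
            (nhds (c * 0)) := hten.mul (tendsto_rpow_neg_atTop hE'pos)
        rw [mul_zero] at h2
        refine h2.congr' ?_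
        filter_upwards [eventually_gt_atTop 0] with P hP
        rw [mul_assoc, ← Real.rpow_add hP]
        simp
      have hγ1' : Tendsto (fun P => γ (j + 1) P) atTop (nhdsWithin 0 (Set.Ioi 0)) := by
        rw [tendsto_nhdsWithin_iff]
        refine ⟨hγ1, ?_⟩
        filter_upwards [eventually_gt_atTop 0] with P hP
        exact hγpos (j + 1) (by omega) P hP
      have hFratio : Tendsto (fun P => F (γ (j + 1) P) / (γ (j + 1) P) ^ k) atTop
          (nhds β) := hFasymp.comp hγ1'
      -- the target limit
      refine ⟨L * β * c ^ k, by positivity, ?_⟩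
      -- eventual identity
      have hiden : ∀ᶠ P : ℝ in atTop,
          γ j P * P ^ ((1 - α) * ∑ l ∈ Finset.range (d + 1 + 1), (k:ℝ) ^ l)
            = (L * (F (γ (j + 1) P) / (γ (j + 1) P) ^ k))
                * (γ (j + 1) P * P ^ E') ^ k := by
        filter_upwards [hrec j hjL1, eventually_gt_atTop 0] with P hr hP
        have hγp : 0 < γ (j + 1) P := hγpos (j + 1) (by omega) P hP
        have hγk : (γ (j + 1) P) ^ k ≠ 0 := by positivity
        rw [hSsucc, hr]
        have hexp2 : (1 - α) * ((k:ℝ) * S + 1) = (1 - α) + (k:ℝ) * E' := by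
          rw [hE']; ring
        rw [hexp2]
        have hPE : P ^ ((1 - α) + (k:ℝ) * E') = P ^ (1 - α) * P ^ ((k:ℝ) * E') :=
          Real.rpow_add hP _ _
        have hPa : P ^ (α - 1) * P ^ (1 - α) = 1 := by
          rw [← Real.rpow_add hP]; norm_num
        have hPk : P ^ ((k:ℝ) * E') = (P ^ E') ^ k := by
          rw [mul_comm, Real.rpow_mul (le_of_lt hP), Real.rpow_natCast]
        have hcanc : F (γ (j + 1) P) / (γ (j + 1) P) ^ k * (γ (j + 1) P) ^ k
            = F (γ (j + 1) P) := div_mul_cancel₀ _ hγk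
        rw [hPE, hPk, mul_pow]
        linear_combination ((L:ℝ) * F (γ (j + 1) P) * (P ^ E') ^ k) * hPa
          - ((L:ℝ) * (P ^ E') ^ k) * hcanc
      have hlim : Tendsto (fun P : ℝ =>
          (L * (F (γ (j + 1) P) / (γ (j + 1) P) ^ k)) * (γ (j + 1) P * P ^ E') ^ k)
          atTop (nhds ((L * β) * c ^ k)) := by
        have h1 : Tendsto (fun P => (L:ℝ) * (F (γ (j + 1) P) / (γ (j + 1) P) ^ k))
            atTop (nhds (L * β)) := hFratio.const_mul _
        exact h1.mul (hten.pow k)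
      exact hlim.congr' (hiden.mono fun _ h => h.symm)
  -- conclude
  intro j hj
  obtain ⟨c, hc, hten⟩ := key (L - 1 - j) (by omega)
  refine ⟨c, hc, ?_⟩
  have h1 : L - 1 - (L - 1 - j) = j := by omega
  have h2 : L - 1 - j + 1 = L - j := by omega
  rw [h1, h2] at hten
  exact hten
end

section
/- Let m ≤ n and 1 ≤ j ≤ i ≤ m be positive integers, L ≥ 1 an integer, and r a real with 0 ≤ r < i; set α = r/i, k = (n−i+1)(m−i+1), and k_j = (n−j+1)(m−j+1). Let F_i, F_j : [0,∞) → [0,1] be nondecreasing with lim_{t→0⁺} F_i(t)/t^k = β_i > 0 and lim_{t→0⁺} F_j(t)/t^{k_j} = β_j > 0, and with F_j(t) > 0 for t > 0. Suppose γ_{L−1}, …, γ₀ : (0,∞) → (0,∞) satisfy, for all sufficiently large P: (P^α/γ_{L−1}(P))·(1 − F_i(γ_{L−1}(P))) = P/L and γ_l(P) = L·P^{α−1}·F_i(γ_{l+1}(P)) for l = 0,…,L−2. Then lim_{P→∞} −log F_j(γ₀(P)) / log P = (1 − r/i)·(n−j+1)·(m−j+1)·∑_{l=0}^{L−1} [(n−i+1)(m−i+1)]^l.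 -/
open Filter Set Finset

/-- If `g` is eventually positive and `log (g P) / log P` tends to a negative limit,
then `g` tends to `0` from the right. -/
private lemma aux_tendsto_zero_of_log (g : ℝ → ℝ)
    (hpos : ∀ᶠ P : ℝ in atTop, 0 < g P) (e : ℝ) (he : e < 0)
    (h : Tendsto (fun P : ℝ => Real.log (g P) / Real.log P) atTop (nhds e)) :
    Tendsto g atTop (nhdsWithin 0 (Set.Ioi 0)) := by
  have hlog : Tendsto (fun P : ℝ => Real.log (g P)) atTop atBot := by
    have hmul := Tendsto.neg_mul_atTop he h Real.tendsto_log_atTop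
    refine hmul.congr' ?_
    filter_upwards [eventually_gt_atTop (1:ℝ)] with P hP
    have hlp : Real.log P ≠ 0 := ne_of_gt (Real.log_pos hP)
    field_simp
  have hexp : Tendsto (fun P : ℝ => Real.exp (Real.log (g P))) atTop (nhds 0) :=
    Real.tendsto_exp_atBot.comp hlog
  rw [tendsto_nhdsWithin_iff]
  refine ⟨hexp.congr' ?_, hpos.mono fun P hP => hP⟩
  filter_upwards [hpos] with P hP
  rw [Real.exp_log hP]

/-- If `c > 0`, `X` eventually positive, and `log (X P)/log P → b`, then
`log (c * P^a * X P) / log P → a + b`. -/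
private lemma aux_log_mul_rpow (c : ℝ) (hc : 0 < c) (a b : ℝ) (X : ℝ → ℝ)
    (hX : ∀ᶠ P : ℝ in atTop, 0 < X P)
    (hXlog : Tendsto (fun P : ℝ => Real.log (X P) / Real.log P) atTop (nhds b)) :
    Tendsto (fun P : ℝ => Real.log (c * P ^ a * X P) / Real.log P) atTop (nhds (a + b)) := by
  have hterm1 : Tendsto (fun P : ℝ => Real.log c / Real.log P) atTop (nhds 0) :=
    tendsto_const_nhds.div_atTop Real.tendsto_log_atTop
  have hsum : Tendsto (fun P : ℝ =>
      Real.log c / Real.log P + a + Real.log (X P) / Real.log P) atTop (nhds (0 + a + b)) :=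
    (hterm1.add tendsto_const_nhds).add hXlog
  rw [zero_add] at hsum
  refine hsum.congr' ?_
  filter_upwards [eventually_gt_atTop (1:ℝ), hX] with P hP hXP
  have hP0 : (0:ℝ) < P := lt_trans one_pos hP
  have hlp : (0:ℝ) < Real.log P := Real.log_pos hP
  have hpa : (0:ℝ) < P ^ a := Real.rpow_pos_of_pos hP0 a
  rw [Real.log_mul (by positivity) (ne_of_gt hXP), Real.log_mul (ne_of_gt hc) (ne_of_gt hpa),
    Real.log_rpow hP0]
  field_simp

/-- If `F(t)/t^κ → β > 0` as `t → 0⁺`, `g → 0⁺` at `atTop`, and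
`log (g P)/log P → e`, then `F ∘ g` is eventually positive and
`log (F (g P)) / log P → κ * e`. -/
private lemma aux_logF_comp (F : ℝ → ℝ) (β : ℝ) (hβ : 0 < β) (κ : ℕ)
    (hF : Tendsto (fun t : ℝ => F t / t ^ κ) (nhdsWithin 0 (Set.Ioi 0)) (nhds β))
    (g : ℝ → ℝ) (hg : Tendsto g atTop (nhdsWithin 0 (Set.Ioi 0)))
    (e : ℝ) (hge : Tendsto (fun P : ℝ => Real.log (g P) / Real.log P) atTop (nhds e)) :
    (∀ᶠ P : ℝ in atTop, 0 < F (g P)) ∧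
      Tendsto (fun P : ℝ => Real.log (F (g P)) / Real.log P) atTop (nhds ((κ : ℝ) * e)) := by
  have hgpos : ∀ᶠ P : ℝ in atTop, 0 < g P := hg.eventually eventually_mem_nhdsWithin
  have hcomp : Tendsto (fun P : ℝ => F (g P) / (g P) ^ κ) atTop (nhds β) := hF.comp hg
  have hratpos : ∀ᶠ P : ℝ in atTop, 0 < F (g P) / (g P) ^ κ :=
    hcomp.eventually (eventually_gt_nhds hβ)
  have hFpos : ∀ᶠ P : ℝ in atTop, 0 < F (g P) := by
    filter_upwards [hgpos, hratpos] with P h1 h2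
    have hpow : (0:ℝ) < (g P) ^ κ := pow_pos h1 κ
    exact (div_pos_iff.mp h2).resolve_right (fun h => absurd hpow (not_lt.mpr h.2.le)) |>.1
  refine ⟨hFpos, ?_⟩
  have hlograt : Tendsto (fun P : ℝ => Real.log (F (g P) / (g P) ^ κ)) atTop
      (nhds (Real.log β)) := ((Real.continuousAt_log (ne_of_gt hβ)).tendsto).comp hcomp
  have hterm1 : Tendsto (fun P : ℝ => Real.log (F (g P) / (g P) ^ κ) / Real.log P) atTop
      (nhds 0) := hlograt.div_atTop Real.tendsto_log_atTop
  have hterm2 : Tendsto (fun P : ℝ => (κ : ℝ) * (Real.log (g P) / Real.log P)) atTop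
      (nhds ((κ : ℝ) * e)) := hge.const_mul _
  have hsum := hterm1.add hterm2
  rw [zero_add] at hsum
  refine hsum.congr' ?_
  filter_upwards [hgpos, hFpos] with P h1 h2
  have hgne : (g P) ^ κ ≠ 0 := ne_of_gt (pow_pos h1 κ)
  rw [Real.log_div (ne_of_gt h2) hgne, Real.log_pow]
  field_simp
  ring

/-- If `F(t)/t^κ → β` as `t → 0⁺` with `κ ≠ 0` and `g → 0⁺`, then `F ∘ g → 0`. -/
private lemma aux_comp_tendsto_zero (F : ℝ → ℝ) (β : ℝ) (κ : ℕ) (hκ : κ ≠ 0)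
    (hF : Tendsto (fun t : ℝ => F t / t ^ κ) (nhdsWithin 0 (Set.Ioi 0)) (nhds β))
    (g : ℝ → ℝ) (hg : Tendsto g atTop (nhdsWithin 0 (Set.Ioi 0))) :
    Tendsto (fun P : ℝ => F (g P)) atTop (nhds 0) := by
  have hgpos : ∀ᶠ P : ℝ in atTop, 0 < g P := hg.eventually eventually_mem_nhdsWithin
  have h1 : Tendsto (fun P : ℝ => F (g P) / (g P) ^ κ) atTop (nhds β) := hF.comp hg
  have hg0 : Tendsto g atTop (nhds 0) := hg.mono_right nhdsWithin_le_nhds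
  have h2 : Tendsto (fun P : ℝ => (g P) ^ κ) atTop (nhds 0) := by
    have := ((continuous_pow κ).tendsto (0:ℝ)).comp hg0
    simpa [zero_pow hκ, Function.comp_def] using this
  have h3 := h1.mul h2
  rw [mul_zero] at h3
  refine h3.congr' ?_
  filter_upwards [hgpos] with P hP
  rw [div_mul_cancel₀ _ (ne_of_gt (pow_pos hP κ))]

/-- Analytic core of the paper's diversity–multiplexing tradeoff theorem with
quantized feedback: quantizing the `i`-th largest Wishart eigenvalue (CDF `Fi`,
`Fi(t) ∼ βi t^((n-i+1)(m-i+1))` near `0`) with the equi-power `L`-bin quantizer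
at multiplexing fraction `α = r / i`, the outage probability `Fj (γ 0 P)` at
multiplexing gain `r` (with `j = ⌈r⌉ ≤ i`, `Fj(t) ∼ βj t^((n-j+1)(m-j+1))`)
decays with SNR exponent
`(1 - r/i) (n-j+1) (m-j+1) ∑_{l=0}^{L-1} ((n-i+1)(m-i+1))^l`. -/
theorem diversity_multiplexing_quantized_feedback
    (m n i j : ℕ) (hmn : m ≤ n) (hj : 1 ≤ j) (hji : j ≤ i) (him : i ≤ m)
    (L : ℕ) (hL : 1 ≤ L)
    (r : ℝ) (hr0 : 0 ≤ r) (hri : r < i)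
    (α : ℝ) (hα : α = r / i)
    (k kj : ℕ) (hk : k = (n - i + 1) * (m - i + 1))
    (hkj : kj = (n - j + 1) * (m - j + 1))
    (Fi Fj : ℝ → ℝ) (βi βj : ℝ) (hβi : 0 < βi) (hβj : 0 < βj)
    (hFi_mono : MonotoneOn Fi (Set.Ici 0))
    (hFi_range : ∀ x : ℝ, 0 ≤ x → Fi x ∈ Set.Icc (0:ℝ) 1)
    (hFi_asymp : Tendsto (fun t : ℝ => Fi t / t ^ k)
      (nhdsWithin 0 (Set.Ioi 0)) (nhds βi))
    (hFj_mono : MonotoneOn Fj (Set.Ici 0))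
    (hFj_range : ∀ x : ℝ, 0 ≤ x → Fj x ∈ Set.Icc (0:ℝ) 1)
    (hFj_pos : ∀ t : ℝ, 0 < t → 0 < Fj t)
    (hFj_asymp : Tendsto (fun t : ℝ => Fj t / t ^ kj)
      (nhdsWithin 0 (Set.Ioi 0)) (nhds βj))
    (γ : ℕ → ℝ → ℝ)
    (hγpos : ∀ l : ℕ, l < L → ∀ P : ℝ, 0 < P → 0 < γ l P)
    (hlast : ∀ᶠ P : ℝ in atTop,
      (P ^ α / γ (L - 1) P) * (1 - Fi (γ (L - 1) P)) = P / L)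
    (hrec : ∀ l : ℕ, l < L - 1 → ∀ᶠ P : ℝ in atTop,
      γ l P = L * P ^ (α - 1) * Fi (γ (l + 1) P)) :
    Tendsto (fun P : ℝ => -Real.log (Fj (γ 0 P)) / Real.log P) atTop
      (nhds ((1 - r / i) * ((n : ℝ) - j + 1) * ((m : ℝ) - j + 1) *
        ∑ l ∈ Finset.range L, (((n : ℝ) - i + 1) * ((m : ℝ) - i + 1)) ^ l)) := by
  have hi1 : 1 ≤ i := le_trans hj hji
  have hipos : (0:ℝ) < i := by exact_mod_cast Nat.lt_of_lt_of_le Nat.zero_lt_one hi1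
  have hα1 : α < 1 := by
    rw [hα, div_lt_one hipos]
    exact hri
  have hαsub : α - 1 < 0 := by linarith
  have hLpos : (0:ℝ) < L := by exact_mod_cast hL
  have hkne : k ≠ 0 := by
    subst hk
    positivity
  have hkpos : (0:ℝ) < (k:ℝ) := by exact_mod_cast Nat.pos_of_ne_zero hkne
  -- main induction: for d < L, asymptotics of γ (L-1-d)
  have main : ∀ d : ℕ, d < L →
      Tendsto (γ (L - 1 - d)) atTop (nhdsWithin 0 (Set.Ioi 0)) ∧
      Tendsto (fun P : ℝ => Real.log (γ (L - 1 - d) P) / Real.log P) atTop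
        (nhds ((α - 1) * ∑ t ∈ Finset.range (d + 1), (k:ℝ) ^ t)) := by
    intro d
    induction d with
    | zero =>
      intro _
      set l := L - 1 - 0 with hl
      have hlL : l < L := by omega
      have hpos : ∀ᶠ P : ℝ in atTop, 0 < γ l P := by
        filter_upwards [eventually_gt_atTop (0:ℝ)] with P hP
        exact hγpos l hlL P hP
      have hlast' : ∀ᶠ P : ℝ in atTop,
          (P ^ α / γ l P) * (1 - Fi (γ l P)) = P / L := by
        simpa [hl] using hlast
      -- eventual structural facts
      have hstruct : ∀ᶠ P : ℝ in atTop,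
          0 < 1 - Fi (γ l P) ∧ γ l P = L * P ^ (α - 1) * (1 - Fi (γ l P)) := by
        filter_upwards [hlast', hpos, eventually_gt_atTop (0:ℝ)] with P heq hg hP
        have hpa : (0:ℝ) < P ^ α := Real.rpow_pos_of_pos hP α
        have hA : (0:ℝ) < P ^ α / γ l P := div_pos hpa hg
        have hPL : (0:ℝ) < P / L := div_pos hP hLpos
        have hX : 0 < 1 - Fi (γ l P) := by
          by_contra h
          push_neg at h
          nlinarith [mul_nonpos_of_nonneg_of_nonpos hA.le h]
        refine ⟨hX, ?_⟩
        have hpa1 : P ^ (α - 1) = P ^ α / P := by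
          rw [Real.rpow_sub hP, Real.rpow_one]
        rw [hpa1]
        field_simp at heq ⊢
        nlinarith [heq]
      -- γ l tends to 0 from the right
      have hub : ∀ᶠ P : ℝ in atTop, γ l P ≤ (L:ℝ) * P ^ (α - 1) := by
        filter_upwards [hstruct, hpos, eventually_gt_atTop (0:ℝ)] with P hs hg hP
        obtain ⟨hX, heq⟩ := hs
        have hFi0 : 0 ≤ Fi (γ l P) := (hFi_range _ hg.le).1
        have hpa : (0:ℝ) < P ^ (α - 1) := Real.rpow_pos_of_pos hP _
        calc γ l P = (L:ℝ) * P ^ (α - 1) * (1 - Fi (γ l P)) := heq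
          _ ≤ (L:ℝ) * P ^ (α - 1) * 1 := by
              apply mul_le_mul_of_nonneg_left (by linarith) (by positivity)
          _ = (L:ℝ) * P ^ (α - 1) := by ring
      have htop : Tendsto (fun P : ℝ => (L:ℝ) * P ^ (α - 1)) atTop (nhds 0) := by
        have h1 : Tendsto (fun P : ℝ => P ^ (-(1 - α))) atTop (nhds 0) :=
          tendsto_rpow_neg_atTop (by linarith)
        have h2 := h1.const_mul (L:ℝ)
        rw [mul_zero] at h2
        refine h2.congr ?_
        intro P
        norm_num
      have hg0 : Tendsto (γ l) atTop (nhds 0) := by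
        refine tendsto_of_tendsto_of_tendsto_of_le_of_le' tendsto_const_nhds htop ?_ hub
        filter_upwards [hpos] with P hP using hP.le
      have hgin : Tendsto (γ l) atTop (nhdsWithin 0 (Set.Ioi 0)) :=
        tendsto_nhdsWithin_iff.mpr ⟨hg0, hpos.mono fun P hP => hP⟩
      -- Fi (γ l P) → 0
      have hFi0 : Tendsto (fun P : ℝ => Fi (γ l P)) atTop (nhds 0) :=
        aux_comp_tendsto_zero Fi βi k hkne hFi_asymp (γ l) hgin
      have hXlim : Tendsto (fun P : ℝ => 1 - Fi (γ l P)) atTop (nhds 1) := by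
        have h1 : Tendsto (fun _ : ℝ => (1:ℝ)) atTop (nhds 1) := tendsto_const_nhds
        simpa using h1.sub hFi0
      have hXlog : Tendsto (fun P : ℝ => Real.log (1 - Fi (γ l P)) / Real.log P) atTop
          (nhds 0) := by
        have hnum : Tendsto (fun P : ℝ => Real.log (1 - Fi (γ l P))) atTop (nhds 0) := by
          have := ((Real.continuousAt_log one_ne_zero).tendsto).comp hXlim
          simpa [Function.comp_def] using this
        exact hnum.div_atTop Real.tendsto_log_atTop
      have hkey := aux_log_mul_rpow (L:ℝ) hLpos (α - 1) 0
        (fun P : ℝ => 1 - Fi (γ l P)) (hstruct.mono fun P hP => hP.1) hXlog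
      rw [add_zero] at hkey
      refine ⟨hgin, ?_⟩
      have hcongr : Tendsto (fun P : ℝ => Real.log (γ l P) / Real.log P) atTop
          (nhds (α - 1)) := by
        refine hkey.congr' ?_
        filter_upwards [hstruct] with P hP
        rw [← hP.2]
      simpa using hcongr
    | succ d ih =>
      intro hdL
      obtain ⟨ihin, ihlog⟩ := ih (by omega)
      set l := L - 1 - (d + 1) with hldef
      have hl1 : l + 1 = L - 1 - d := by omega
      have hlL1 : l < L - 1 := by omega
      have hlL : l < L := by omega
      have hpos : ∀ᶠ P : ℝ in atTop, 0 < γ l P := by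
        filter_upwards [eventually_gt_atTop (0:ℝ)] with P hP
        exact hγpos l hlL P hP
      rw [← hl1] at ihin ihlog
      obtain ⟨hFpos, hFlog⟩ := aux_logF_comp Fi βi hβi k hFi_asymp (γ (l + 1)) ihin _ ihlog
      have hkey := aux_log_mul_rpow (L:ℝ) hLpos (α - 1) ((k:ℝ) * ((α - 1) *
        ∑ t ∈ Finset.range (d + 1), (k:ℝ) ^ t)) (fun P : ℝ => Fi (γ (l + 1) P)) hFpos hFlog
      have hlog : Tendsto (fun P : ℝ => Real.log (γ l P) / Real.log P) atTop
          (nhds ((α - 1) * ∑ t ∈ Finset.range (d + 1 + 1), (k:ℝ) ^ t)) := by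
        have hval : (α - 1) * ∑ t ∈ Finset.range (d + 1 + 1), (k:ℝ) ^ t =
            (α - 1) + (k:ℝ) * ((α - 1) * ∑ t ∈ Finset.range (d + 1), (k:ℝ) ^ t) := by
          rw [geom_sum_succ]
          ring
        rw [hval]
        refine hkey.congr' ?_
        filter_upwards [hrec l hlL1] with P hP
        rw [← hP]
      have helneg : (α - 1) * ∑ t ∈ Finset.range (d + 1 + 1), (k:ℝ) ^ t < 0 := by
        have hsumpos : (0:ℝ) < ∑ t ∈ Finset.range (d + 1 + 1), (k:ℝ) ^ t :=
          Finset.sum_pos (fun t _ => pow_pos hkpos t) (by simp)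
        exact mul_neg_of_neg_of_pos hαsub hsumpos
      exact ⟨aux_tendsto_zero_of_log (γ l) hpos _ helneg hlog, hlog⟩
  -- apply at d = L - 1, i.e. l = 0
  obtain ⟨h0in, h0log⟩ := main (L - 1) (by omega)
  have hLL : L - 1 - (L - 1) = 0 := by omega
  have hLL2 : L - 1 + 1 = L := by omega
  rw [hLL] at h0in h0log
  rw [hLL2] at h0log
  obtain ⟨hFjpos, hFjlog⟩ := aux_logF_comp Fj βj hβj kj hFj_asymp (γ 0) h0in _ h0log
  have hfinal := hFjlog.neg
  -- identify the limit value
  have hin : i ≤ n := le_trans him hmn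
  have hjm : j ≤ m := le_trans hji him
  have hjn : j ≤ n := le_trans hjm hmn
  have hkc : ((k:ℕ):ℝ) = ((n:ℝ) - i + 1) * ((m:ℝ) - i + 1) := by
    subst hk
    push_cast [Nat.cast_sub hin, Nat.cast_sub him]
    ring
  have hkjc : ((kj:ℕ):ℝ) = ((n:ℝ) - j + 1) * ((m:ℝ) - j + 1) := by
    subst hkj
    push_cast [Nat.cast_sub hjn, Nat.cast_sub hjm]
    ring
  have hval : (1 - r / i) * ((n : ℝ) - j + 1) * ((m : ℝ) - j + 1) *
      ∑ l ∈ Finset.range L, (((n : ℝ) - i + 1) * ((m : ℝ) - i + 1)) ^ l =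
      -((kj:ℝ) * ((α - 1) * ∑ t ∈ Finset.range L, (k:ℝ) ^ t)) := by
    rw [hα, hkjc, hkc]
    ring
  rw [hval]
  refine hfinal.congr ?_
  intro P
  rw [neg_div]
end
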